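/- Let m, c, n₀, γ > 0. Then c ∫_{ℝ³} (p⁰)² J(p) dp = n₀ m² c³ [3K₃(γ) + γK₂(γ)] / (γ K₂(γ)). -/

import Mathlib

noncomputable section

open MeasureTheory

/-- Euclidean inner product on ℝ³. -/
def dot3 (p q : Fin 3 → ℝ) : ℝ := ∑ i, p i * q i

/-- The relativistic energy `p⁰ = √(m²c² + |p|²)`. -/
noncomputable def pZero (m c : ℝ) (p : Fin 3 → ℝ) : ℝ :=
  Real.sqrt (m ^ 2 * c ^ 2 + dot3 p p)

/-- Modified Bessel function of the second kind (integral formula). -/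
noncomputable def Kbessel (j : ℕ) (γ : ℝ) : ℝ :=
  (2 ^ j * (Nat.factorial j : ℝ) / (Nat.factorial (2 * j) : ℝ)) * γ ^ (-(j : ℤ)) *
    ∫ l in Set.Ioi γ, Real.exp (-l) * (l ^ 2 - γ ^ 2) ^ ((j : ℝ) - 1 / 2)

/-- The rest-frame relativistic Maxwellian (Jüttner distribution)
`J(p) = [n₀γ/(4πm³c³K₂(γ))] exp(−γp⁰/(mc))`. -/
noncomputable def Juttner (m c n₀ γ : ℝ) (p : Fin 3 → ℝ) : ℝ :=
  n₀ * γ / (4 * Real.pi * m ^ 3 * c ^ 3 * Kbessel 2 γ) *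
    Real.exp (-(γ * pZero m c p) / (m * c))
/-!
In spherical coordinates and after the substitution `|p| = (mc/γ) √(l² - γ²)`, under which
`p⁰ = mc l / γ`, the integral becomes `4π (mc/γ)⁵ ∫_γ^∞ l³ e^{-l} √(l² - γ²) dl`.
Writing `l³ = l (l² - γ²) + γ² l` and integrating by parts,
`∫_γ^∞ l e^{-l} (l² - γ²)^{j - 1/2} dl = (2j - 1)!! γ^{j+1} K_{j+1}(γ)`,
so that this is `3 γ³ K₃(γ) + γ⁴ K₂(γ)`.
-/

open Real Set MeasureTheory Filter Topology
open scoped Nat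

section BesselIntegrals

variable {γ : ℝ}

lemma rpow_sq_sub_sq_le {l : ℝ} (hl : 0 ≤ l) (h : 0 ≤ l ^ 2 - γ ^ 2) {s : ℝ} (hs : 0 ≤ s) :
    (l ^ 2 - γ ^ 2) ^ s ≤ l ^ (2 * s) := by
  calc (l ^ 2 - γ ^ 2) ^ s ≤ (l ^ 2) ^ s := rpow_le_rpow h (by nlinarith [sq_nonneg γ]) hs
    _ = l ^ (2 * s) := by rw [rpow_mul hl]; norm_cast

lemma integrableOn_pow_mul_exp_neg_mul_rpow (hγ : 0 < γ) (n : ℕ) {s : ℝ} (hs : 0 ≤ s) :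
    IntegrableOn (fun l ↦ l ^ n * exp (-l) * (l ^ 2 - γ ^ 2) ^ s) (Ioi γ) := by
  have hGamma : IntegrableOn (fun l ↦ exp (-l) * l ^ ((n : ℝ) + 2 * s)) (Ioi γ) := by
    simpa using (GammaIntegral_convergent (s := n + 2 * s + 1) (by positivity)).mono_set
      (Ioi_subset_Ioi hγ.le)
  refine hGamma.mono' ?_ ?_
  · refine ContinuousOn.aestronglyMeasurable ?_ measurableSet_Ioi
    refine (by fun_prop : Continuous fun l : ℝ ↦ l ^ n * exp (-l)).continuousOn.mul
      (ContinuousOn.rpow_const (by fun_prop) fun l (hl : γ < l) ↦ Or.inl ?_)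
    nlinarith
  · filter_upwards [ae_restrict_mem measurableSet_Ioi] with l (hl : γ < l)
    have hl0 : 0 < l := hγ.trans hl
    have hu : 0 ≤ l ^ 2 - γ ^ 2 := by nlinarith
    rw [norm_of_nonneg (by positivity), rpow_add hl0, rpow_natCast]
    calc l ^ n * exp (-l) * (l ^ 2 - γ ^ 2) ^ s ≤ l ^ n * exp (-l) * l ^ (2 * s) := by
          gcongr; exact rpow_sq_sub_sq_le hl0.le hu hs
      _ = _ := by ring

/-- Integration by parts, using `d/dl (l² - γ²)^(s+1) = 2(s+1) l (l² - γ²)^s`. -/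
lemma integral_mul_exp_neg_mul_rpow (hγ : 0 < γ) {s : ℝ} (hs : 0 ≤ s) :
    ∫ l in Ioi γ, l * exp (-l) * (l ^ 2 - γ ^ 2) ^ s
      = (2 * (s + 1))⁻¹ * ∫ l in Ioi γ, exp (-l) * (l ^ 2 - γ ^ 2) ^ (s + 1) := by
  set G : ℝ → ℝ := fun l ↦ exp (-l) * (l ^ 2 - γ ^ 2) ^ (s + 1)
  have hderiv : ∀ l ∈ Ioi γ, HasDerivAt G
      (2 * (s + 1) * (l * exp (-l) * (l ^ 2 - γ ^ 2) ^ s) - G l) l := by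
    intro l (hl : γ < l)
    have hu : l ^ 2 - γ ^ 2 ≠ 0 := by nlinarith
    refine ((hasDerivAt_neg l).exp.mul (((hasDerivAt_pow 2 l).sub_const (γ ^ 2)).rpow_const
      (p := s + 1) (Or.inl hu))).congr_deriv ?_
    simp only [G, add_sub_cancel_right]
    push_cast
    ring
  have hcont : ContinuousWithinAt G (Ici γ) γ :=
    ((by fun_prop : Continuous fun l : ℝ ↦ exp (-l)).continuousAt.mul
      (ContinuousAt.rpow_const (by fun_prop) (Or.inr (by linarith)))).continuousWithinAt
  have hlim : Tendsto G atTop (𝓝 0) := by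
    refine squeeze_zero_norm' ?_
      (by simpa using tendsto_rpow_mul_exp_neg_mul_atTop_nhds_zero (2 * (s + 1)) 1 one_pos)
    filter_upwards [eventually_gt_atTop γ] with l hl
    have hl0 : 0 < l := hγ.trans hl
    have hu : 0 ≤ l ^ 2 - γ ^ 2 := by nlinarith
    rw [norm_of_nonneg (by positivity), mul_comm]
    exact mul_le_mul_of_nonneg_left (rpow_sq_sub_sq_le hl0.le hu (by linarith)) (exp_pos _).le
  have hI := integrableOn_pow_mul_exp_neg_mul_rpow hγ 1 hs
  have hJ := integrableOn_pow_mul_exp_neg_mul_rpow hγ 0 (s := s + 1) (by linarith)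
  simp only [pow_one, pow_zero, one_mul] at hI hJ
  have hFTC := integral_Ioi_of_hasDerivAt_of_tendsto hcont hderiv
    ((hI.const_mul _).sub hJ) hlim
  have hG : G γ = 0 := by simp [G, zero_rpow (by linarith : s + 1 ≠ 0)]
  rw [integral_sub (hI.const_mul _) hJ, integral_const_mul, hG] at hFTC
  field_simp
  linarith

lemma integral_exp_neg_mul_rpow_eq_Kbessel (j : ℕ) (hγ : γ ≠ 0) :
    ∫ l in Ioi γ, exp (-l) * (l ^ 2 - γ ^ 2) ^ ((j : ℝ) - 1 / 2)
      = (2 * j)! / (2 ^ j * j !) * γ ^ j * Kbessel j γ := by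
  rw [Kbessel, zpow_neg, zpow_natCast]
  field_simp

lemma integral_mul_exp_neg_mul_rpow_eq_Kbessel {j : ℕ} (hj : 1 ≤ j) (hγ : 0 < γ) :
    ∫ l in Ioi γ, l * exp (-l) * (l ^ 2 - γ ^ 2) ^ ((j : ℝ) - 1 / 2)
      = (2 * j)! / (2 ^ j * j !) * γ ^ (j + 1) * Kbessel (j + 1) γ := by
  have hj' : (1 : ℝ) ≤ j := by exact_mod_cast hj
  have hexp : (j : ℝ) - 1 / 2 + 1 = ((j + 1 : ℕ) : ℝ) - 1 / 2 := by push_cast; ring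
  rw [integral_mul_exp_neg_mul_rpow hγ (by linarith), hexp,
    integral_exp_neg_mul_rpow_eq_Kbessel _ hγ.ne', show 2 * (j + 1) = 2 * j + 1 + 1 by ring,
    Nat.factorial_succ, Nat.factorial_succ, Nat.factorial_succ]
  rw [show 2 * (((j + 1 : ℕ) : ℝ) - 1 / 2) = 2 * j + 1 by push_cast; ring]
  push_cast
  field_simp
  ring

end BesselIntegrals

lemma dot3_self_nonneg (p : Fin 3 → ℝ) : 0 ≤ dot3 p p :=
  Finset.sum_nonneg fun i _ ↦ mul_self_nonneg (p i)

lemma dot3_ofLp (x : EuclideanSpace ℝ (Fin 3)) : dot3 x.ofLp x.ofLp = ‖x‖ ^ 2 := by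
  rw [EuclideanSpace.real_norm_sq_eq]
  simp [dot3, sq]

lemma integral_fun_dot3 (f : ℝ → ℝ) :
    ∫ p : Fin 3 → ℝ, f (dot3 p p) = 4 * π * ∫ r in Ioi 0, r ^ 2 * f (r ^ 2) := by
  rw [← (PiLp.volume_preserving_ofLp (Fin 3)).integral_comp
    (MeasurableEquiv.toLp 2 (Fin 3 → ℝ)).symm.measurableEmbedding]
  simp only [dot3_ofLp]
  rw [integral_fun_norm_addHaar volume (fun r ↦ f (r ^ 2)), finrank_euclideanSpace_fin,
    measureReal_def, EuclideanSpace.volume_ball_fin_three]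
  simp only [ENNReal.ofReal_one, one_pow, one_mul,
    ENNReal.toReal_ofReal (by positivity : 0 ≤ π * 4 / 3), nsmul_eq_mul, smul_eq_mul]
  push_cast
  ring

lemma integral_Ioi_zero_eq_integral_Ioi_mul_sqrt_sq_sub_sq {γ k : ℝ} (hγ : 0 ≤ γ) (hk : 0 < k)
    (g : ℝ → ℝ) :
    ∫ r in Ioi 0, g r = ∫ l in Ioi γ, k * l / √(l ^ 2 - γ ^ 2) * g (k * √(l ^ 2 - γ ^ 2)) := by
  set f : ℝ → ℝ := fun l ↦ k * √(l ^ 2 - γ ^ 2)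
  have hmono : StrictMonoOn f (Ici γ) := fun a (ha : γ ≤ a) b _ hab ↦
    mul_lt_mul_of_pos_left (sqrt_lt_sqrt (by nlinarith) (by nlinarith)) hk
  have htop : Tendsto f atTop atTop := (tendsto_sqrt_atTop.comp
    (tendsto_atTop_add_const_right _ _ (tendsto_pow_atTop two_ne_zero))).const_mul_atTop hk
  have himg : f '' Ioi γ = Ioi 0 := by
    simpa [f] using (by fun_prop : Continuous f).continuousOn.image_Ioi_of_strictMonoOn hmono htop
  have hderiv : ∀ l ∈ Ioi γ, HasDerivWithinAt f (k * l / √(l ^ 2 - γ ^ 2)) (Ioi γ) l := by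
    intro l (hl : γ < l)
    have hu : l ^ 2 - γ ^ 2 ≠ 0 := by nlinarith
    refine ((((hasDerivAt_pow 2 l).sub_const (γ ^ 2)).sqrt hu).const_mul k).hasDerivWithinAt
      |>.congr_deriv ?_
    field_simp
    ring
  rw [← himg, integral_image_eq_integral_abs_deriv_smul measurableSet_Ioi hderiv
    (hmono.injOn.mono Ioi_subset_Ici_self)]
  refine setIntegral_congr_fun measurableSet_Ioi fun l (hl : γ < l) ↦ ?_
  have hl0 : 0 < l := hγ.trans_lt hl
  have hu : 0 < l ^ 2 - γ ^ 2 := by nlinarith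
  rw [smul_eq_mul, abs_of_pos (by positivity)]

lemma integral_pZero_sq_mul_exp {m c γ : ℝ} (hm : 0 < m) (hc : 0 < c) (hγ : 0 < γ) :
    ∫ p : Fin 3 → ℝ, pZero m c p ^ 2 * exp (-(γ * pZero m c p) / (m * c))
      = 4 * π * (m * c / γ) ^ 5 * ∫ l in Ioi γ, l ^ 3 * exp (-l) * √(l ^ 2 - γ ^ 2) := by
  set k := m * c / γ with hk_def
  have hk : 0 < k := by positivity
  set f : ℝ → ℝ := fun t ↦ (m ^ 2 * c ^ 2 + t) * exp (-(γ * √(m ^ 2 * c ^ 2 + t)) / (m * c))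
  have hf : ∀ p, pZero m c p ^ 2 * exp (-(γ * pZero m c p) / (m * c)) = f (dot3 p p) := by
    intro p
    rw [pZero, sq_sqrt (by have := dot3_self_nonneg p; positivity)]
  simp_rw [hf]
  rw [integral_fun_dot3, integral_Ioi_zero_eq_integral_Ioi_mul_sqrt_sq_sub_sq hγ.le hk,
    mul_assoc (4 * π), ← integral_const_mul (k ^ 5)]
  congr 1
  refine setIntegral_congr_fun measurableSet_Ioi fun l (hl : γ < l) ↦ ?_
  have hl0 : 0 < l := hγ.trans hl
  have hu : 0 < l ^ 2 - γ ^ 2 := by nlinarith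
  -- since `k γ = mc`, the energy at `|p| = k √(l² - γ²)` is `p⁰ = k l`
  have hE : m ^ 2 * c ^ 2 + (k * √(l ^ 2 - γ ^ 2)) ^ 2 = (k * l) ^ 2 := by
    rw [mul_pow, sq_sqrt hu.le, hk_def]
    field_simp
    ring
  have hexp : -(γ * (k * l)) / (m * c) = -l := by
    rw [hk_def]
    field_simp
  simp only [f, hE, sqrt_sq (by positivity : 0 ≤ k * l), hexp]
  field_simp

lemma integral_pow_three_mul_exp_neg_mul_sqrt {γ : ℝ} (hγ : 0 < γ) :
    ∫ l in Ioi γ, l ^ 3 * exp (-l) * √(l ^ 2 - γ ^ 2)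
      = 3 * γ ^ 3 * Kbessel 3 γ + γ ^ 4 * Kbessel 2 γ := by
  have hI1 := integrableOn_pow_mul_exp_neg_mul_rpow hγ 1 (s := ((1 : ℕ) : ℝ) - 1 / 2) (by norm_num)
  have hI2 := integrableOn_pow_mul_exp_neg_mul_rpow hγ 1 (s := ((2 : ℕ) : ℝ) - 1 / 2) (by norm_num)
  simp only [pow_one] at hI1 hI2
  have hsplit : ∀ l ∈ Ioi γ, l ^ 3 * exp (-l) * √(l ^ 2 - γ ^ 2)
      = l * exp (-l) * (l ^ 2 - γ ^ 2) ^ (((2 : ℕ) : ℝ) - 1 / 2)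
        + γ ^ 2 * (l * exp (-l) * (l ^ 2 - γ ^ 2) ^ (((1 : ℕ) : ℝ) - 1 / 2)) := by
    intro l (hl : γ < l)
    have hu : 0 < l ^ 2 - γ ^ 2 := by nlinarith
    rw [sqrt_eq_rpow, show ((2 : ℕ) : ℝ) - 1 / 2 = 1 + 1 / 2 by norm_num, rpow_add hu, rpow_one,
      show ((1 : ℕ) : ℝ) - 1 / 2 = 1 / 2 by norm_num]
    ring
  rw [setIntegral_congr_fun measurableSet_Ioi hsplit, integral_add hI2 (hI1.const_mul _),
    integral_const_mul, integral_mul_exp_neg_mul_rpow_eq_Kbessel one_le_two hγ,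
    integral_mul_exp_neg_mul_rpow_eq_Kbessel le_rfl hγ]
  norm_num [Nat.factorial]
  ring

theorem stmt9_general (m c n₀ γ : ℝ) (hm : 0 < m) (hc : 0 < c) (hγ : 0 < γ) :
    c * ∫ p : Fin 3 → ℝ, (pZero m c p) ^ 2 * Juttner m c n₀ γ p
      = n₀ * m ^ 2 * c ^ 3 * (3 * Kbessel 3 γ + γ * Kbessel 2 γ) / (γ * Kbessel 2 γ) := by
  rcases eq_or_ne (Kbessel 2 γ) 0 with hK | hK
  · -- both sides are `0` by the convention `x / 0 = 0`
    simp [Juttner, hK]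
  simp_rw [Juttner, mul_left_comm _ (n₀ * γ / _)]
  rw [integral_const_mul, integral_pZero_sq_mul_exp hm hc hγ,
    integral_pow_three_mul_exp_neg_mul_sqrt hγ]
  field_simp

/-- `c ∫_{ℝ³} (p⁰)² J(p) dp = n₀m²c³[3K₃(γ) + γK₂(γ)]/(γK₂(γ))`. -/
theorem stmt9 (m c n₀ γ : ℝ) (hm : 0 < m) (hc : 0 < c) (hn : 0 < n₀) (hγ : 0 < γ) :
    c * ∫ p : Fin 3 → ℝ, (pZero m c p) ^ 2 * Juttner m c n₀ γ p
      = n₀ * m ^ 2 * c ^ 3 * (3 * Kbessel 3 γ + γ * Kbessel 2 γ) / (γ * Kbessel 2 γ) :=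
  stmt9_general m c n₀ γ hm hc hγ
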